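/- arXiv:1604.00512 — 4 statements merged into one kernel-verified Lean document; each statement's English description precedes it below -/
import Mathlib

section
/- Let α, m, S_l, S_u be real numbers with 1 < α ≤ 2, S_l > 0 and S_u ≥ 0. Assume that (4 − m)·S_l² + (4 − m)·S_l·S_u + S_u² < 0 and that α·(S_l + S_u) > 2·S_l + S_u. Then m > α²/(α − 1). -/
/-- Arithmetic core of Theorem 1.1 (improved 4n²-inequality). -/
theorem improved_4n2_core (α m Sl Su : ℝ) (hα1 : 1 < α) (hα2 : α ≤ 2)
    (hSl : 0 < Sl) (hSu : 0 ≤ Su)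
    (hquad : (4 - m) * Sl ^ 2 + (4 - m) * Sl * Su + Su ^ 2 < 0)
    (hNF : α * (Sl + Su) > 2 * Sl + Su) :
    m > α ^ 2 / (α - 1) := by
  have hα : (0:ℝ) < α - 1 := by linarith
  rw [gt_iff_lt, div_lt_iff₀ hα]
  -- key linear consequence of hNF: (2-α)*Sl < (α-1)*Su
  have h1 : (2 - α) * Sl < (α - 1) * Su := by nlinarith
  have h2 : (2 - α) * (Sl + Su) < Su := by nlinarith
  have h3 : (2 - α) ^ 2 * (Sl * (Sl + Su)) ≤ (α - 1) * Su ^ 2 := by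
    nlinarith [mul_nonneg (mul_nonneg (sub_nonneg.2 hα2) hSl.le) hSu,
      mul_le_mul_of_nonneg_left h2.le (mul_nonneg (sub_nonneg.2 hα2) hSl.le)]
  have h4 : (4 * Sl ^ 2 + 4 * Sl * Su + Su ^ 2) < m * (Sl * (Sl + Su)) := by nlinarith
  have hpos : 0 < Sl * (Sl + Su) := by positivity
  nlinarith [mul_lt_mul_of_pos_left h4 hα]
end

section
/- Let d₁, d₂, M be integers with d₂ ≥ d₁ ≥ 2 and d₁ + d₂ = M + 2. Then, as integers, C(d₂ + M + 2, d₂) − ( (M + 3) + C(d₂ + M + 1, d₂ − 1) + C(d₂ − d₁ + M + 2, d₂ − d₁) ) ≥ C(M + 2, 2) − 2. -/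
/-- Pascal's rule in subtraction form. -/
lemma pascal_sub (n k : ℕ) (hn : 1 ≤ n) (hk : 1 ≤ k) :
    n.choose k = (n - 1).choose (k - 1) + (n - 1).choose k := by
  obtain ⟨m, rfl⟩ := Nat.exists_eq_add_of_le hn
  obtain ⟨j, rfl⟩ := Nat.exists_eq_add_of_le hk
  simp [Nat.add_comm, Nat.choose_succ_succ]

lemma choose_two_odd (b : ℕ) : (2 * b + 1).choose 2 = (2 * b + 1) * b := by
  rw [Nat.choose_two_right]
  have h : (2 * b + 1) * (2 * b + 1 - 1) = ((2 * b + 1) * b) * 2 := by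
    simp; ring
  rw [h, Nat.mul_div_cancel _ (by norm_num)]

lemma helperH (b : ℕ) (hb : 4 ≤ b) : (2 * b + 1).choose 2 ≤ (2 * b).choose (b - 1) := by
  induction b, hb using Nat.le_induction with
  | base => decide
  | succ b hb ih =>
    have h1 : (2 * b + 1).choose b ≤ (2 * (b + 1)).choose b :=
      Nat.choose_le_choose b (by omega)
    have hb1 : b - 1 + 1 = b := by omega
    have h2 : (2 * b + 1).choose b = (2 * b).choose (b - 1) + (2 * b).choose b := by
      simpa using pascal_sub (2 * b + 1) b (by omega) (by omega)
    have h3 : (2 * b).choose (b - 1) ≤ (2 * b).choose b := by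
      have := Nat.choose_le_middle (b - 1) (2 * b)
      simpa [Nat.mul_div_cancel_left] using this
    have v1 := choose_two_odd b
    have v2 : (2 * (b + 1) + 1).choose 2 = (2 * b + 3) * (b + 1) := by
      have h := choose_two_odd (b + 1)
      rw [show 2 * (b + 1) + 1 = 2 * b + 3 from by ring] at h ⊢
      exact h
    have hnum : (2 * b + 3) * (b + 1) ≤ 2 * ((2 * b + 1) * b) := by nlinarith
    have hgoal : (2 * (b + 1) + 1).choose 2 ≤ (2 * (b + 1)).choose (b + 1 - 1) := by
      have : (b + 1 - 1) = b := by omega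
      rw [this, v2]
      omega
    exact hgoal

lemma mainL (a b : ℕ) (ha : 2 ≤ a) (hab : a ≤ b) :
    (2 * b).choose (b - a) + (a + b).choose 2 + (a + b - 1) ≤ (a + 2 * b - 1).choose b := by
  have hb2 : 2 ≤ b := ha.trans hab
  by_cases hb4 : 4 ≤ b
  · have hH := helperH b hb4
    have c1 : (2 * b + 1).choose b ≤ (a + 2 * b - 1).choose b :=
      Nat.choose_le_choose b (by omega)
    have hb1 : b - 1 + 1 = b := by omega
    have c2 : (2 * b + 1).choose b = (2 * b).choose (b - 1) + (2 * b).choose b := by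
      simpa using pascal_sub (2 * b + 1) b (by omega) (by omega)
    have c3 : (2 * b).choose (b - a) ≤ (2 * b).choose b := by
      have := Nat.choose_le_middle (b - a) (2 * b)
      simpa [Nat.mul_div_cancel_left] using this
    have c4 : (a + b).choose 2 + (a + b - 1) ≤ (2 * b + 1).choose 2 := by
      have p : (a + b + 1).choose 2 = (a + b).choose 1 + (a + b).choose 2 :=
        Nat.choose_succ_succ (a + b) 1
      have p1 : (a + b).choose 1 = a + b := Nat.choose_one_right _
      have mono : (a + b + 1).choose 2 ≤ (2 * b + 1).choose 2 :=
        Nat.choose_le_choose 2 (by omega)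
      omega
    omega
  · interval_cases b <;> interval_cases a <;> decide

/-- Arithmetic content of Proposition 3.3. -/
theorem codim_R02_estimate (M d₁ d₂ : ℕ) (hd₁ : 2 ≤ d₁) (hd : d₁ ≤ d₂)
    (hsum : d₁ + d₂ = M + 2) :
    ((Nat.choose (M + 2) 2 : ℤ) - 2) ≤
      (Nat.choose (d₂ + M + 2) d₂ : ℤ) -
        ((M + 3 : ℤ) + (Nat.choose (d₂ + M + 1) (d₂ - 1) : ℤ) +
          (Nat.choose (d₂ - d₁ + M + 2) (d₂ - d₁) : ℤ)) := by
  have hd₂ : 2 ≤ d₂ := hd₁.trans hd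
  have key := mainL d₁ d₂ hd₁ hd
  have e1 : d₂ + M + 2 = d₁ + 2 * d₂ := by omega
  have e2 : d₂ + M + 1 = d₁ + 2 * d₂ - 1 := by omega
  have e3 : d₂ - d₁ + M + 2 = 2 * d₂ := by omega
  have e5 : M + 2 = d₁ + d₂ := by omega
  have pas : (d₁ + 2 * d₂).choose d₂ =
      (d₁ + 2 * d₂ - 1).choose (d₂ - 1) + (d₁ + 2 * d₂ - 1).choose d₂ :=
    pascal_sub _ _ (by omega) (by omega)
  rw [e1, e2, e3, e5, pas]
  have hM : (M : ℤ) = (d₁ : ℤ) + d₂ - 2 := by omega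
  push_cast
  have key' := key
  zify [show (1:ℕ) ≤ d₁ + d₂ from by omega] at key'
  linarith
end

section
/- Let M and t be real numbers with M ≥ 13 and 2 ≤ t ≤ M/2 − 1. Then (M − 2t + 1)·(t² − 2t + M) ≥ (M − 2)(M − 1)/2. -/
/-- Estimate for ω₂ from the proof of Proposition 3.5. -/
theorem omega2_estimate (M t : ℝ) (hM : 13 ≤ M) (ht1 : 2 ≤ t) (ht2 : t ≤ M / 2 - 1) :
    (M - 2) * (M - 1) / 2 ≤ (M - 2 * t + 1) * (t ^ 2 - 2 * t + M) := by
  nlinarith [sq_nonneg (t-2), sq_nonneg (M/2-1-t), mul_nonneg (sub_nonneg.2 ht1) (sub_nonneg.2 ht2), mul_nonneg (mul_nonneg (sub_nonneg.2 ht1) (sub_nonneg.2 ht2)) (by linarith : (0:ℝ) ≤ M - 13), sq_nonneg (t - M/4)]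
end

section
/- Let M, d₁, d₂ be integers with M ≥ 13, 3 ≤ d₁, d₁ + 2 ≤ d₂ and d₁ + d₂ = M + 2. Define integers m_j for 1 ≤ j ≤ M − 2 by m_j = ⌊(j+3)/2⌋ if j ≤ 2d₁ − 2 and m_j = j − d₁ + 2 if j > 2d₁ − 2. For an integer b with 1 ≤ b ≤ M − 4, set θ_b = (M − 1 − b)·( (∑_{j=1}^{b} m_j) + (d₂ − 2) − b ) + 1. Then θ_b ≥ (M − 2)(M − 1)/2 + 1 for every b with 1 ≤ b ≤ M − 4. -/
/-!
Every degree satisfies `m_j ≥ (j + 2) / 2`, so `4 ∑_{j ≤ b} m_j ≥ b (b + 5)`; together with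
`2 d₂ ≥ M + 4` this gives `4 (θ_b - 1) ≥ (M - 1 - b) (b² + b + 2M)`. The right-hand side exceeds
`2 (M - 2) (M - 1)` by `(M - 3 - b) b (b - 1) + 4 (M - 1 - b) ≥ 0`.
-/

open Finset

/-- The degree `m_j = deg h_j` of the `j`-th polynomial in the standard order. -/
def standardDegree (d₁ j : ℤ) : ℤ :=
  if j ≤ 2 * d₁ - 2 then (j + 3) / 2 else j - d₁ + 2

lemma add_two_le_two_mul_standardDegree (d₁ j : ℤ) : j + 2 ≤ 2 * standardDegree d₁ j := by
  unfold standardDegree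
  split <;> omega

lemma two_mul_sum_Icc_add_two {b : ℤ} (hb : 0 ≤ b) :
    2 * ∑ j ∈ Icc 1 b, (j + 2) = b * (b + 5) := by
  induction b, hb using Int.leInduction with
  | base => rfl
  | succ n hn ih =>
    have hIcc : Icc 1 (n + 1) = insert (n + 1) (Icc 1 n) := by
      ext x
      simp only [mem_Icc, mem_insert]
      omega
    rw [hIcc, sum_insert (by simp)]
    linear_combination ih

lemma mul_add_five_le_four_mul_sum_standardDegree (d₁ : ℤ) {b : ℤ} (hb : 0 ≤ b) :
    b * (b + 5) ≤ 4 * ∑ j ∈ Icc 1 b, standardDegree d₁ j := by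
  have hterm : ∑ j ∈ Icc 1 b, (j + 2) ≤ 2 * ∑ j ∈ Icc 1 b, standardDegree d₁ j := by
    rw [mul_sum]
    exact sum_le_sum fun j _ ↦ add_two_le_two_mul_standardDegree d₁ j
  linarith [two_mul_sum_Icc_add_two hb]

lemma two_mul_sub_two_mul_sub_one_le (M b : ℤ) (hb : b ≤ M - 3) :
    2 * ((M - 2) * (M - 1)) ≤ (M - 1 - b) * (b * b + b + 2 * M) := by
  have hcubic : 0 ≤ (M - 3 - b) * (b ^ 2 - b) :=
    mul_nonneg (by linarith) (sub_nonneg.2 (Int.le_self_sq b))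
  linear_combination hcubic + 4 * (by linarith : (0 : ℤ) ≤ M - 1 - b)

theorem theta_b_estimate_general (M d₁ d₂ : ℤ)
    (hd : d₁ + 2 ≤ d₂) (hsum : d₁ + d₂ = M + 2) (b : ℤ) (hb1 : 1 ≤ b)
    (hb2 : b ≤ M - 4) :
    (M - 2) * (M - 1) / 2 + 1 ≤
      (M - 1 - b) *
          ((∑ j ∈ Finset.Icc (1 : ℤ) b,
              (if j ≤ 2 * d₁ - 2 then (j + 3) / 2 else j - d₁ + 2)) +
            (d₂ - 2) - b) + 1 := by
  set S := ∑ j ∈ Icc 1 b, standardDegree d₁ j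
  have hS : b * (b + 5) ≤ 4 * S := mul_add_five_le_four_mul_sum_standardDegree d₁ (by omega)
  have hfactor : b * b + b + 2 * M ≤ 4 * (S + (d₂ - 2) - b) := by linarith
  have hkey : (M - 2) * (M - 1) ≤ 2 * ((M - 1 - b) * (S + (d₂ - 2) - b)) := by
    nlinarith [two_mul_sub_two_mul_sub_one_le M b (by omega),
      mul_le_mul_of_nonneg_left hfactor (by omega : (0 : ℤ) ≤ M - 1 - b)]
  change (M - 2) * (M - 1) / 2 + 1 ≤ (M - 1 - b) * (S + (d₂ - 2) - b) + 1
  omega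

/-- Proposition 3.5: the lower bound θ_b ≥ (M−2)(M−1)/2 + 1 for 1 ≤ b ≤ M − 4,
where θ_b = (M−1−b)((∑_{j=1}^{b} m_j) + (d₂−2) − b) + 1 and m_j is the degree
of the j-th polynomial in the standard order: m_j = ⌊(j+3)/2⌋ for j ≤ 2d₁−2 and
m_j = j − d₁ + 2 for j > 2d₁ − 2. -/
theorem theta_b_estimate (M d₁ d₂ : ℤ) (hM : 13 ≤ M) (hd₁ : 3 ≤ d₁)
    (hd : d₁ + 2 ≤ d₂) (hsum : d₁ + d₂ = M + 2) (b : ℤ) (hb1 : 1 ≤ b)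
    (hb2 : b ≤ M - 4) :
    (M - 2) * (M - 1) / 2 + 1 ≤
      (M - 1 - b) *
          ((∑ j ∈ Finset.Icc (1 : ℤ) b,
              (if j ≤ 2 * d₁ - 2 then (j + 3) / 2 else j - d₁ + 2)) +
            (d₂ - 2) - b) + 1 :=
  theta_b_estimate_general M d₁ d₂ hd hsum b hb1 hb2
end
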